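/- arXiv:math/0411294 — 8 statements merged into one kernel-verified Lean document; each statement's English description precedes it below -/
import Mathlib

section
/- Let g = [[a,b],[c,d]] be a 2m×2m real matrix written in m×m blocks, and let x, y ∈ M_m(ℝ) be such that cx+d and cy+d are invertible. Then det((ax+b)(cx+d)⁻¹ − (ay+b)(cy+d)⁻¹) · det(cx+d) · det(cy+d) = det(g) · det(x − y). -/
open Matrix

/-- The matrix instance of `Δ(g·x − g·y)² = A(g,x) A(g,y) Δ(x−y)²`:
`det(g·x − g·y) · det(cx+d) · det(cy+d) = det g · det(x−y)`. -/
theorem det_conformal_difference {m : ℕ}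
    (a b c d x y : Matrix (Fin m) (Fin m) ℝ)
    (hx : IsUnit (c * x + d).det) (hy : IsUnit (c * y + d).det) :
    ((a * x + b) * (c * x + d)⁻¹ - (a * y + b) * (c * y + d)⁻¹).det
        * (c * x + d).det * (c * y + d).det
      = (Matrix.fromBlocks a b c d).det * (x - y).det := by
  set P := c * x + d with hP
  set Q := c * y + d with hQ
  set A₁ := a * x + b with hA₁
  set A₂ := a * y + b with hA₂
  set X := A₁ * P⁻¹ - A₂ * Q⁻¹ with hX
  have hPP : P⁻¹ * P = 1 := nonsing_inv_mul P hx
  have hQQ : Q⁻¹ * Q = 1 := nonsing_inv_mul Q hy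
  -- Step 1: g * [[x,y],[1,1]] = [[A₁,A₂],[P,Q]]
  have h1 : Matrix.fromBlocks a b c d * Matrix.fromBlocks x y 1 1
      = Matrix.fromBlocks A₁ A₂ P Q := by
    rw [Matrix.fromBlocks_multiply]
    simp [hA₁, hA₂, hP, hQ]
  -- Step 2: det [[x,y],[1,1]] = det (x - y)
  have h2 : (Matrix.fromBlocks x y 1 1).det = (x - y).det := by
    have : Matrix.fromBlocks x y 1 1
        = Matrix.fromBlocks (x - y) y (0 : Matrix (Fin m) (Fin m) ℝ) 1
            * Matrix.fromBlocks (1 : Matrix (Fin m) (Fin m) ℝ) 0 1 1 := by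
      rw [Matrix.fromBlocks_multiply]
      simp
    rw [this, Matrix.det_mul, Matrix.det_fromBlocks_zero₂₁,
      Matrix.det_fromBlocks_zero₁₂]
    simp
  -- Step 3: factor [[A₁,A₂],[P,Q]]
  have h3 : Matrix.fromBlocks A₁ A₂ P Q
      = Matrix.fromBlocks 1 (A₂ * Q⁻¹) 0 1 * Matrix.fromBlocks (X * P) 0 P Q := by
    have hXP : X * P = A₁ - A₂ * Q⁻¹ * P := by
      rw [hX, sub_mul, mul_assoc A₁, hPP, mul_one, mul_assoc]
    rw [Matrix.fromBlocks_multiply, hXP]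
    simp [mul_assoc A₂, hQQ]
  have h4 : (Matrix.fromBlocks A₁ A₂ P Q).det = X.det * P.det * Q.det := by
    rw [h3, Matrix.det_mul, Matrix.det_fromBlocks_zero₂₁,
      Matrix.det_fromBlocks_zero₁₂, Matrix.det_mul]
    simp [Matrix.det_one]
  have := congrArg Matrix.det h1
  rw [Matrix.det_mul, h2, h4] at this
  linarith [this]
end

section
/- Let g = [[a,b],[c,d]] ∈ GL(2m,ℝ) (written in m×m blocks) and let x₁, x₂, x₃, x₄ ∈ M_m(ℝ) be such that cx_i + d is invertible for i = 1,2,3,4 and the matrices x₂−x₃, x₁−x₄ and (g·x₂ − g·x₃), (g·x₁ − g·x₄) are all invertible. Then the Kantor cross ratio is invariant: [det(g·x₁ − g·x₃)/det(g·x₂ − g·x₃)] · [det(g·x₂ − g·x₄)/det(g·x₁ − g·x₄)] = [det(x₁ − x₃)/det(x₂ − x₃)] · [det(x₂ − x₄)/det(x₁ − x₄)]. -/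
/-!
With `g = fromBlocks a b c d`, one has
`(g·x - g·y) (c y + d) = (a - (g·x) c) (x - y)`, and `a - (g·x) c` is the Schur complement
of `c x + d` in `g * fromBlocks 1 x 0 1`. Taking determinants,
`det (g·x - g·y) = det g * det (x - y) / (det (c x + d) * det (c y + d))`.
In the cross ratio every factor `det (c xᵢ + d)` and the two factors `det g` cancel.
-/

open Matrix

namespace Matrix

variable {n R : Type*} [Fintype n] [DecidableEq n] [CommRing R]

theorem fromBlocks_mul_fromBlocks_one_zero_one (a b c d x : Matrix n n R) :
    fromBlocks a b c d * fromBlocks 1 x 0 1 = fromBlocks a (a * x + b) c (c * x + d) := by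
  simp [fromBlocks_multiply]

theorem det_mul_det_schur_eq_det_fromBlocks (a b c d x : Matrix n n R)
    (hx : IsUnit (c * x + d).det) :
    (c * x + d).det * (a - (a * x + b) * (c * x + d)⁻¹ * c).det = (fromBlocks a b c d).det := by
  have := (c * x + d).invertibleOfIsUnitDet hx
  rw [← invOf_eq_nonsing_inv, ← det_fromBlocks₂₂, ← fromBlocks_mul_fromBlocks_one_zero_one,
    det_mul, det_fromBlocks_zero₂₁]
  simp

theorem mobius_sub_mobius_mul (a b c d x y : Matrix n n R)
    (hx : IsUnit (c * x + d).det) (hy : IsUnit (c * y + d).det) :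
    ((a * x + b) * (c * x + d)⁻¹ - (a * y + b) * (c * y + d)⁻¹) * (c * y + d)
      = (a - (a * x + b) * (c * x + d)⁻¹ * c) * (x - y) := by
  have hd : (a * x + b) * (c * x + d)⁻¹ * d
      = a * x + b - (a * x + b) * (c * x + d)⁻¹ * (c * x) := by
    rw [eq_sub_iff_add_eq, add_comm, ← mul_add]
    exact nonsing_inv_mul_cancel_right _ _ hx
  rw [sub_mul, nonsing_inv_mul_cancel_right _ _ hy]
  simp only [sub_mul, mul_sub, mul_add, mul_assoc] at hd ⊢
  rw [hd]
  abel

theorem det_mobius_sub_mobius_mul (a b c d x y : Matrix n n R)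
    (hx : IsUnit (c * x + d).det) (hy : IsUnit (c * y + d).det) :
    ((a * x + b) * (c * x + d)⁻¹ - (a * y + b) * (c * y + d)⁻¹).det
      * ((c * x + d).det * (c * y + d).det)
      = (fromBlocks a b c d).det * (x - y).det := by
  rw [← det_mul_det_schur_eq_det_fromBlocks a b c d x hx]
  have h := congrArg det (mobius_sub_mobius_mul a b c d x y hx hy)
  rw [det_mul, det_mul] at h
  linear_combination (c * x + d).det * h

theorem det_mobius_sub_mobius {K : Type*} [Field K] (a b c d x y : Matrix n n K)
    (hx : IsUnit (c * x + d).det) (hy : IsUnit (c * y + d).det) :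
    ((a * x + b) * (c * x + d)⁻¹ - (a * y + b) * (c * y + d)⁻¹).det
      = (fromBlocks a b c d).det * (x - y).det / ((c * x + d).det * (c * y + d).det) := by
  rw [eq_div_iff (mul_ne_zero hx.ne_zero hy.ne_zero)]
  exact det_mobius_sub_mobius_mul a b c d x y hx hy

end Matrix

theorem kantor_cross_ratio_invariant_general {m : ℕ}
    (a b c d : Matrix (Fin m) (Fin m) ℝ)
    (hg : IsUnit (Matrix.fromBlocks a b c d).det)
    (x₁ x₂ x₃ x₄ : Matrix (Fin m) (Fin m) ℝ)
    (h₁ : IsUnit (c * x₁ + d).det) (h₂ : IsUnit (c * x₂ + d).det)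
    (h₃ : IsUnit (c * x₃ + d).det) (h₄ : IsUnit (c * x₄ + d).det) :
    ((a * x₁ + b) * (c * x₁ + d)⁻¹ - (a * x₃ + b) * (c * x₃ + d)⁻¹).det
        / ((a * x₂ + b) * (c * x₂ + d)⁻¹ - (a * x₃ + b) * (c * x₃ + d)⁻¹).det
      * (((a * x₂ + b) * (c * x₂ + d)⁻¹ - (a * x₄ + b) * (c * x₄ + d)⁻¹).det
        / ((a * x₁ + b) * (c * x₁ + d)⁻¹ - (a * x₄ + b) * (c * x₄ + d)⁻¹).det)
    = (x₁ - x₃).det / (x₂ - x₃).det * ((x₂ - x₄).det / (x₁ - x₄).det) := by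
  rw [det_mobius_sub_mobius a b c d x₁ x₃ h₁ h₃, det_mobius_sub_mobius a b c d x₂ x₃ h₂ h₃,
    det_mobius_sub_mobius a b c d x₂ x₄ h₂ h₄, det_mobius_sub_mobius a b c d x₁ x₄ h₁ h₄]
  have := hg.ne_zero
  have := h₁.ne_zero
  have := h₂.ne_zero
  have := h₃.ne_zero
  have := h₄.ne_zero
  field_simp

/-- Invariance of the Kantor cross ratio under conformal (fractional linear)
transformations of `M_m(ℝ)`. -/
theorem kantor_cross_ratio_invariant {m : ℕ}
    (a b c d : Matrix (Fin m) (Fin m) ℝ)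
    (hg : IsUnit (Matrix.fromBlocks a b c d).det)
    (x₁ x₂ x₃ x₄ : Matrix (Fin m) (Fin m) ℝ)
    (h₁ : IsUnit (c * x₁ + d).det) (h₂ : IsUnit (c * x₂ + d).det)
    (h₃ : IsUnit (c * x₃ + d).det) (h₄ : IsUnit (c * x₄ + d).det)
    (h₂₃ : IsUnit (x₂ - x₃).det) (h₁₄ : IsUnit (x₁ - x₄).det)
    (hg₂₃ : IsUnit ((a * x₂ + b) * (c * x₂ + d)⁻¹
        - (a * x₃ + b) * (c * x₃ + d)⁻¹).det)
    (hg₁₄ : IsUnit ((a * x₁ + b) * (c * x₁ + d)⁻¹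
        - (a * x₄ + b) * (c * x₄ + d)⁻¹).det) :
    ((a * x₁ + b) * (c * x₁ + d)⁻¹ - (a * x₃ + b) * (c * x₃ + d)⁻¹).det
        / ((a * x₂ + b) * (c * x₂ + d)⁻¹ - (a * x₃ + b) * (c * x₃ + d)⁻¹).det
      * (((a * x₂ + b) * (c * x₂ + d)⁻¹ - (a * x₄ + b) * (c * x₄ + d)⁻¹).det
        / ((a * x₁ + b) * (c * x₁ + d)⁻¹ - (a * x₄ + b) * (c * x₄ + d)⁻¹).det)
    = (x₁ - x₃).det / (x₂ - x₃).det * ((x₂ - x₄).det / (x₁ - x₄).det) :=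
  kantor_cross_ratio_invariant_general a b c d hg x₁ x₂ x₃ x₄ h₁ h₂ h₃ h₄
end

section
/- Let g = [[a,b],[c,d]] ∈ SL(2m,ℝ) (written in m×m blocks) and let Υ be the 2m×2m matrix [[0, I_m],[I_m, 0]]. Then the following are equivalent: (i) for every x ∈ M_m(ℝ) such that both cx+d and −cxᵀ+d are invertible, one has (a(−xᵀ)+b)(c(−xᵀ)+d)⁻¹ = −((ax+b)(cx+d)⁻¹)ᵀ; (ii) there exists λ ∈ {−1, 1} such that gᵀ Υ g = λ Υ, i.e. aᵀc + cᵀa = 0, bᵀd + dᵀb = 0 and aᵀd + cᵀb = λ I_m. -/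
/-!
On the set `U` of `x` for which both `cx + d` and `-cxᵀ + d` are invertible, clearing the
denominators turns (i) into the vanishing of the quadratic matrix polynomial
`-xᵀ E xᵀ + xᵀ F - Fᵀ xᵀ + H`, where `E = aᵀc + cᵀa`, `F = aᵀd + cᵀb`, `H = bᵀd + dᵀb` are the
blocks of `gᵀ Υ g`. Since `g` is invertible, `U` is nonempty; as its complement meets every line
in finitely many points, `U` is dense and the polynomial vanishes identically. That happens
exactly when `E = H = 0` and `F` is central, i.e. `gᵀ Υ g = l Υ` for a scalar `l`, and taking
determinants gives `l ^ 2m = (det g) ^ 2 = 1`.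
-/

open Matrix

namespace Matrix

variable {n R K : Type*} [Fintype n] [DecidableEq n]

section CommRing

variable [CommRing R]

theorem mul_inv_eq_neg_transpose_mul_inv_iff {A B P Q : Matrix n n R} (hA : IsUnit A.det)
    (hB : IsUnit B.det) : P * B⁻¹ = -(Q * A⁻¹)ᵀ ↔ Aᵀ * P + Qᵀ * B = 0 := by
  have hAT : IsUnit Aᵀ.det := by rwa [det_transpose]
  rw [transpose_mul, transpose_nonsing_inv, add_eq_zero_iff_eq_neg]
  constructor
  · intro h
    rw [← nonsing_inv_mul_cancel_right B P hB, h, Matrix.neg_mul, Matrix.mul_neg,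
      Matrix.mul_assoc, mul_nonsing_inv_cancel_left _ _ hAT]
  · intro h
    rw [← nonsing_inv_mul_cancel_left Aᵀ P hAT, h, Matrix.mul_neg, Matrix.neg_mul,
      ← Matrix.mul_assoc, Matrix.mul_assoc, mul_nonsing_inv _ hB, Matrix.mul_one]

theorem finite_setOf_det_add_smul_eq_zero [IsDomain R] (M N : Matrix n n R)
    (h : ∃ t : R, (M + t • N).det ≠ 0) : {t : R | (M + t • N).det = 0}.Finite := by
  set p : Polynomial R :=
    (M.map Polynomial.C + (Polynomial.X : Polynomial R) • N.map Polynomial.C).det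
  have hp : ∀ t, p.eval t = (M + t • N).det := fun t => by
    rw [← Polynomial.coe_evalRingHom, RingHom.map_det]
    congr 1
    ext i j
    simp only [RingHom.mapMatrix_apply, Polynomial.coe_evalRingHom, map_apply, add_apply,
      smul_apply, smul_eq_mul, Polynomial.eval_add, Polynomial.eval_mul, Polynomial.eval_C,
      Polynomial.eval_X]
  obtain ⟨t₀, ht₀⟩ := h
  refine (Polynomial.finite_setOfPred_isRoot (p := p) fun hp0 => ht₀ ?_).subset fun t ht => ?_
  · rw [← hp, hp0, Polynomial.eval_zero]
  · simpa only [Set.mem_ofPred_eq, Polynomial.IsRoot.def, hp] using ht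

theorem conformal_neg_transpose_eq_iff {a b c d x : Matrix n n R}
    (h₁ : IsUnit (c * x + d).det) (h₂ : IsUnit (c * (-xᵀ) + d).det) :
    (a * (-xᵀ) + b) * (c * (-xᵀ) + d)⁻¹ = -((a * x + b) * (c * x + d)⁻¹)ᵀ ↔
      -(xᵀ * (aᵀ * c + cᵀ * a) * xᵀ) + xᵀ * (aᵀ * d + cᵀ * b) - (aᵀ * d + cᵀ * b)ᵀ * xᵀ +
        (bᵀ * d + dᵀ * b) = 0 := by
  rw [mul_inv_eq_neg_transpose_mul_inv_iff h₁ h₂]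
  congr! 1
  simp only [transpose_add, transpose_mul, transpose_transpose]
  noncomm_ring

theorem forall_quadratic_eq_zero_iff [IsAddTorsionFree R] {E F H : Matrix n n R} :
    (∀ x : Matrix n n R, -(xᵀ * E * xᵀ) + xᵀ * F - Fᵀ * xᵀ + H = 0) ↔
      E = 0 ∧ H = 0 ∧ ∃ l : R, F = l • 1 := by
  constructor
  · intro h
    have hH : H = 0 := by simpa using h 0
    have h₁ := h 1
    have h₂ := h (-1)
    simp only [transpose_one, transpose_neg, Matrix.mul_one, Matrix.one_mul, Matrix.neg_mul,
      Matrix.mul_neg, neg_neg, hH, add_zero] at h₁ h₂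
    have h2E : E + E = 0 := by linear_combination (norm := abel) -h₁ - h₂
    have hE : E = 0 := by
      ext i j
      have h2 : (2 : ℕ) • E i j = 0 := by rw [two_nsmul]; exact congr($h2E i j)
      exact (smul_eq_zero.1 h2).resolve_left two_ne_zero
    have hFT : Fᵀ = F := by
      rw [hE, neg_zero, zero_add, sub_eq_zero] at h₁
      exact h₁.symm
    have hcomm : ∀ y, y * F = F * y := fun y => by
      simpa [hE, hH, hFT, sub_eq_zero] using h yᵀ
    obtain ⟨l, -, hl⟩ := (center_eq_scalar_image (n := n) (α := R)).subset
      (Semigroup.mem_center_iff.2 hcomm)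
    exact ⟨hE, hH, l, by rw [← hl, smul_one_eq_diagonal]; rfl⟩
  · rintro ⟨rfl, rfl, l, rfl⟩ x
    simp

theorem det_fromBlocks_sq_eq_pow {a b c d : Matrix n n R} {l : R}
    (hE : aᵀ * c + cᵀ * a = 0) (hH : bᵀ * d + dᵀ * b = 0) (hF : aᵀ * d + cᵀ * b = l • 1) :
    (fromBlocks a b c d).det ^ 2 = l ^ (Fintype.card n + Fintype.card n) := by
  set Υ : Matrix (n ⊕ n) (n ⊕ n) R := fromBlocks 0 1 1 0
  have hΥ : IsUnit Υ.det := by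
    refine IsUnit.of_mul_eq_one Υ.det ?_
    rw [← det_mul, fromBlocks_multiply]
    simp [fromBlocks_one]
  have hG : bᵀ * c + dᵀ * a = l • 1 := by
    simpa [add_comm] using congrArg transpose hF
  have hgram : (fromBlocks a b c d)ᵀ * Υ * fromBlocks a b c d = l • Υ := by
    simp only [Υ, fromBlocks_transpose, fromBlocks_multiply, fromBlocks_smul, Matrix.mul_zero,
      Matrix.mul_one, zero_add, add_zero, smul_zero]
    rw [add_comm (cᵀ * a), add_comm (cᵀ * b), add_comm (dᵀ * a), add_comm (dᵀ * b),
      hE, hF, hG, hH]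
  have hdet := congrArg det hgram
  rw [det_mul, det_mul, det_transpose, det_smul, Fintype.card_sum] at hdet
  exact hΥ.mul_right_cancel (by rw [← hdet]; ring)

theorem exists_sign_smul_one_of_det_eq_one [LinearOrder R] [IsStrictOrderedRing R]
    {a b c d : Matrix n n R} {l : R} (hg : (fromBlocks a b c d).det = 1)
    (hE : aᵀ * c + cᵀ * a = 0) (hH : bᵀ * d + dᵀ * b = 0) (hF : aᵀ * d + cᵀ * b = l • 1) :
    ∃ l' : R, (l' = -1 ∨ l' = 1) ∧ aᵀ * d + cᵀ * b = l' • 1 := by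
  have hl : l ^ (Fintype.card n + Fintype.card n) = 1 := by
    simpa [hg] using (det_fromBlocks_sq_eq_pow hE hH hF).symm
  rcases pow_eq_one_iff_cases.1 hl with hn | rfl | ⟨rfl, -⟩
  · have : IsEmpty n := Fintype.card_eq_zero_iff.1 (by omega)
    exact ⟨1, Or.inr rfl, Subsingleton.elim _ _⟩
  · exact ⟨1, Or.inr rfl, hF⟩
  · exact ⟨-1, Or.inl rfl, hF⟩

end CommRing

section Field

variable [Field K]

/-- The matrices `x` such that both `x` and `-xᵀ` lie in the domain of `x ↦ (ax+b)(cx+d)⁻¹`. -/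
def negTransposeDomain (c d : Matrix n n K) : Set (Matrix n n K) :=
  {x | IsUnit (c * x + d).det ∧ IsUnit (c * (-xᵀ) + d).det}

theorem finite_setOf_add_smul_notMem_negTransposeDomain {c d x v : Matrix n n K}
    (h₁ : ∃ t : K, IsUnit (c * (x + t • v) + d).det)
    (h₂ : ∃ t : K, IsUnit (c * (-(x + t • v)ᵀ) + d).det) :
    {t : K | x + t • v ∉ negTransposeDomain c d}.Finite := by
  have hline₁ (t : K) : c * (x + t • v) + d = (c * x + d) + t • (c * v) := by
    rw [Matrix.mul_add, Matrix.mul_smul]; abel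
  have hline₂ (t : K) : c * (-(x + t • v)ᵀ) + d = (c * (-xᵀ) + d) + t • (c * (-vᵀ)) := by
    rw [transpose_add, transpose_smul, neg_add, ← smul_neg, Matrix.mul_add, Matrix.mul_smul]
    abel
  simp only [hline₁, hline₂, isUnit_iff_ne_zero] at h₁ h₂
  simp only [negTransposeDomain, Set.mem_ofPred_eq, hline₁, hline₂, isUnit_iff_ne_zero,
    not_and_or, not_not, Set.ofPred_or]
  exact (finite_setOf_det_add_smul_eq_zero _ _ h₁).union
    (finite_setOf_det_add_smul_eq_zero _ _ h₂)

theorem negTransposeDomain_nonempty [Infinite K] {c d x : Matrix n n K}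
    (hx : IsUnit (c * x + d).det) : (negTransposeDomain c d).Nonempty := by
  -- the line from `x` (at `t = 0`) to `-xᵀ` (at `t = 1`)
  obtain ⟨t, ht⟩ := (finite_setOf_add_smul_notMem_negTransposeDomain (v := -xᵀ - x)
    ⟨0, by simpa using hx⟩ ⟨1, by simpa using hx⟩).infinite_compl.nonempty
  exact ⟨_, not_not.1 ht⟩

theorem exists_isUnit_det_mul_add [Infinite K] {a b c d : Matrix n n K}
    (hg : IsUnit (fromBlocks a b c d).det) : ∃ x, IsUnit (c * x + d).det := by
  obtain ⟨u, v, huv⟩ : ∃ u v : Matrix n n K, c * u + d * v = 1 := by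
    have h := mul_nonsing_inv _ hg
    rw [← fromBlocks_toBlocks (fromBlocks a b c d)⁻¹, fromBlocks_multiply, ← fromBlocks_one,
      fromBlocks_inj] at h
    exact ⟨_, _, h.2.2.2⟩
  have hv : {s : K | (v + s • 1).det = 0}.Finite := by
    refine (Polynomial.finite_setOfPred_isRoot (charpoly_monic (-v)).ne_zero).subset fun s hs => ?_
    simpa [eval_charpoly, smul_one_eq_diagonal, add_comm] using hs
  have hd : {s : K | (1 + s • d).det = 0}.Finite :=
    finite_setOf_det_add_smul_eq_zero _ _ ⟨0, by simp⟩
  obtain ⟨s, hs⟩ := (hv.union hd).infinite_compl.nonempty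
  simp only [Set.mem_compl_iff, Set.mem_union, Set.mem_ofPred_eq, not_or] at hs
  have hw : IsUnit (v + s • 1).det := isUnit_iff_ne_zero.2 hs.1
  refine ⟨u * (v + s • 1)⁻¹, isUnit_of_mul_isUnit_left (y := (v + s • 1).det) ?_⟩
  have : (c * (u * (v + s • 1)⁻¹) + d) * (v + s • 1) = 1 + s • d := by
    rw [Matrix.add_mul, ← Matrix.mul_assoc c u, nonsing_inv_mul_cancel_right _ _ hw,
      Matrix.mul_add, ← add_assoc, huv, Matrix.mul_smul, Matrix.mul_one]
  rw [← det_mul, this]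
  exact isUnit_iff_ne_zero.2 hs.2

end Field

theorem dense_negTransposeDomain {𝕜 : Type*} [NontriviallyNormedField 𝕜] [CompleteSpace 𝕜]
    {c d : Matrix n n 𝕜} (h : ∃ x, IsUnit (c * x + d).det) : Dense (negTransposeDomain c d) := by
  obtain ⟨x₀, hx₀⟩ := h
  obtain ⟨y, hy₁, hy₂⟩ := negTransposeDomain_nonempty hx₀
  intro x
  have hbad := finite_setOf_add_smul_notMem_negTransposeDomain (x := x) (v := y - x)
    ⟨1, by simpa using hy₁⟩ ⟨1, by simpa using hy₂⟩
  simpa using map_mem_closure (f := fun t : 𝕜 => x + t • (y - x)) (by fun_prop)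
    (hbad.countable.dense_compl 𝕜 0) fun t ht => not_not.1 ht

end Matrix

/-- For `g = [[a,b],[c,d]] ∈ SL(2m,ℝ)`, the conformal transformation
`x ↦ (ax+b)(cx+d)⁻¹` commutes with `x ↦ −xᵀ` if and only if `gᵀ Υ g = λ Υ` for some
`λ ∈ {−1,1}`, where `Υ = [[0,I],[I,0]]`; i.e. `aᵀc + cᵀa = 0`, `bᵀd + dᵀb = 0` and
`aᵀd + cᵀb = λ I`. -/
theorem conformal_commutes_neg_transpose_iff {m : ℕ}
    (a b c d : Matrix (Fin m) (Fin m) ℝ)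
    (hg : (Matrix.fromBlocks a b c d).det = 1) :
    (∀ x : Matrix (Fin m) (Fin m) ℝ,
        IsUnit (c * x + d).det → IsUnit (c * (-xᵀ) + d).det →
        (a * (-xᵀ) + b) * (c * (-xᵀ) + d)⁻¹ = -((a * x + b) * (c * x + d)⁻¹)ᵀ)
    ↔ (∃ l : ℝ, (l = -1 ∨ l = 1) ∧
        aᵀ * c + cᵀ * a = 0 ∧ bᵀ * d + dᵀ * b = 0 ∧
        aᵀ * d + cᵀ * b = l • (1 : Matrix (Fin m) (Fin m) ℝ)) := by
  have hdense : Dense (negTransposeDomain c d) :=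
    dense_negTransposeDomain (exists_isUnit_det_mul_add (a := a) (b := b) (by simp [hg]))
  set q : Matrix (Fin m) (Fin m) ℝ → Matrix (Fin m) (Fin m) ℝ := fun x =>
    -(xᵀ * (aᵀ * c + cᵀ * a) * xᵀ) + xᵀ * (aᵀ * d + cᵀ * b) - (aᵀ * d + cᵀ * b)ᵀ * xᵀ +
      (bᵀ * d + dᵀ * b)
  have hq : Continuous q := by fun_prop
  calc _ ↔ ∀ x ∈ negTransposeDomain c d, q x = 0 := forall_congr' fun x =>
        ⟨fun h ⟨h₁, h₂⟩ => (conformal_neg_transpose_eq_iff h₁ h₂).1 (h h₁ h₂),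
          fun h h₁ h₂ => (conformal_neg_transpose_eq_iff h₁ h₂).2 (h ⟨h₁, h₂⟩)⟩
    _ ↔ ∀ x, q x = 0 := ⟨fun h => congrFun (hq.ext_on hdense continuous_const h), fun h x _ => h x⟩
    _ ↔ aᵀ * c + cᵀ * a = 0 ∧ bᵀ * d + dᵀ * b = 0 ∧ ∃ l : ℝ, aᵀ * d + cᵀ * b = l • 1 :=
      forall_quadratic_eq_zero_iff
    _ ↔ _ := by
      refine ⟨fun ⟨hE, hH, _, hF⟩ => ?_, fun ⟨l, _, hE, hH, hF⟩ => ⟨hE, hH, l, hF⟩⟩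
      obtain ⟨l, hl, hF⟩ := exists_sign_smul_one_of_det_eq_one hg hE hH hF
      exact ⟨l, hl, hE, hH, hF⟩
end

section
/- Let g = [[a,b],[c,d]] ∈ SL(2m,ℝ) (written in m×m blocks) satisfy aᵀc + cᵀa = 0, bᵀd + dᵀb = 0 and aᵀd + cᵀb = I_m (that is, gᵀΥg = Υ with Υ = [[0,I_m],[I_m,0]]). Then for every x ∈ M_m(ℝ), det(d − c xᵀ)² = det(cx + d)². -/
open Matrix

private lemma aux_det_eq {m : ℕ} (a b c d : Matrix (Fin m) (Fin m) ℝ)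
    (hg : (Matrix.fromBlocks a b c d).det = 1)
    (had : a * dᵀ + b * cᵀ = 1) (hcd : c * dᵀ + d * cᵀ = 0)
    (x : Matrix (Fin m) (Fin m) ℝ) (hD : IsUnit (c * x + d).det) :
    (d - c * xᵀ).det = (c * x + d).det := by
  set D := c * x + d with hDdef
  set P := dᵀ - x * cᵀ with hPdef
  have hI : Invertible D := D.invertibleOfIsUnitDet hD
  -- c * P = -(D * cᵀ)
  have hcP : c * P = -(D * cᵀ) := by
    have h0 : c * P + D * cᵀ = 0 := by
      rw [hPdef, hDdef,
        show c * (dᵀ - x * cᵀ) + (c * x + d) * cᵀ = c * dᵀ + d * cᵀ by noncomm_ring, hcd]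
    exact eq_neg_of_add_eq_zero_left h0
  -- a * P + (a*x+b) * cᵀ = 1
  have haP : a * P + (a * x + b) * cᵀ = 1 := by
    rw [hPdef,
      show a * (dᵀ - x * cᵀ) + (a * x + b) * cᵀ = a * dᵀ + b * cᵀ by noncomm_ring, had]
  have hDinv : D⁻¹ * D = 1 := nonsing_inv_mul D hD
  set S := a - (a * x + b) * D⁻¹ * c with hSdef
  have hSP : S * P = 1 := by
    calc S * P = a * P - (a * x + b) * D⁻¹ * (c * P) := by rw [hSdef]; noncomm_ring
    _ = a * P + (a * x + b) * D⁻¹ * (D * cᵀ) := by rw [hcP]; noncomm_ring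
    _ = a * P + (a * x + b) * ((D⁻¹ * D) * cᵀ) := by noncomm_ring
    _ = a * P + (a * x + b) * cᵀ := by rw [hDinv, one_mul]
    _ = 1 := haP
  -- determinant of h = g * u(x)
  have hh : Matrix.fromBlocks a b c d * Matrix.fromBlocks 1 x 0 1
      = Matrix.fromBlocks a (a * x + b) c D := by
    rw [Matrix.fromBlocks_multiply]
    congr 1 <;> simp [hDdef]
  have hdeth : (Matrix.fromBlocks a (a * x + b) c D).det = 1 := by
    rw [← hh, det_mul, hg, det_fromBlocks_zero₂₁]
    simp
  have hschur : D.det * S.det = 1 := by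
    have := Matrix.det_fromBlocks₂₂ a (a * x + b) c D
    rw [hdeth, invOf_eq_nonsing_inv] at this
    rw [hSdef]
    exact this.symm
  have hdetSP : S.det * P.det = 1 := by rw [← det_mul, hSP, det_one]
  have hPD : P.det = D.det := by
    calc P.det = (D.det * S.det) * P.det := by rw [hschur, one_mul]
    _ = D.det * (S.det * P.det) := by ring
    _ = D.det := by rw [hdetSP, mul_one]
  calc (d - c * xᵀ).det = (d - c * xᵀ)ᵀ.det := (det_transpose _).symm
  _ = P.det := by rw [hPdef]; congr 1; simp [transpose_sub, transpose_mul]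
  _ = D.det := hPD

/-- For `g = [[a,b],[c,d]] ∈ SL(2m,ℝ)` with `gᵀΥg = Υ` (`Υ = [[0,I],[I,0]]`), the
conformal factor satisfies `A(g,−xᵀ) = A(g,x)`:  `det(d − cxᵀ)² = det(cx+d)²`. -/
theorem conformal_factor_neg_transpose {m : ℕ}
    (a b c d : Matrix (Fin m) (Fin m) ℝ)
    (hg : (Matrix.fromBlocks a b c d).det = 1)
    (h1 : aᵀ * c + cᵀ * a = 0) (h2 : bᵀ * d + dᵀ * b = 0)
    (h3 : aᵀ * d + cᵀ * b = 1) :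
    ∀ x : Matrix (Fin m) (Fin m) ℝ,
      (d - c * xᵀ).det ^ 2 = (c * x + d).det ^ 2 := by
  -- first derive g * (Υ gᵀ Υ) = 1
  have hMg : Matrix.fromBlocks dᵀ bᵀ cᵀ aᵀ * Matrix.fromBlocks a b c d = 1 := by
    rw [Matrix.fromBlocks_multiply]
    have e11 : dᵀ * a + bᵀ * c = 1 := by
      have := congrArg Matrix.transpose h3
      simpa [Matrix.transpose_add, Matrix.transpose_mul, add_comm] using this
    rw [e11, show dᵀ * b + bᵀ * d = 0 from by rw [add_comm]; exact h2,
      show cᵀ * a + aᵀ * c = 0 from by rw [add_comm]; exact h1,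
      show cᵀ * b + aᵀ * d = 1 from by rw [add_comm]; exact h3,
      Matrix.fromBlocks_one]
  have hgM : Matrix.fromBlocks a b c d * Matrix.fromBlocks dᵀ bᵀ cᵀ aᵀ = 1 :=
    mul_eq_one_comm.mp hMg
  rw [Matrix.fromBlocks_multiply, ← Matrix.fromBlocks_one] at hgM
  have had : a * dᵀ + b * cᵀ = 1 := by
    have := congrArg Matrix.toBlocks₁₁ hgM
    simpa only [Matrix.toBlocks_fromBlocks₁₁] using this
  have hcd : c * dᵀ + d * cᵀ = 0 := by
    have := congrArg Matrix.toBlocks₂₁ hgM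
    simpa only [Matrix.toBlocks_fromBlocks₂₁] using this
  intro x
  by_cases hD : IsUnit (c * x + d).det
  · rw [aux_det_eq a b c d hg had hcd x hD]
  · have hD0 : (c * x + d).det = 0 := by
      by_contra h
      exact hD (isUnit_iff_ne_zero.mpr h)
    have hE0 : (d - c * xᵀ).det = 0 := by
      by_contra h
      have hE : IsUnit (c * (-xᵀ) + d).det := by
        rw [show c * (-xᵀ) + d = d - c * xᵀ by noncomm_ring]
        exact isUnit_iff_ne_zero.mpr h
      have := aux_det_eq a b c d hg had hcd (-xᵀ) hE
      rw [show d - c * (-xᵀ)ᵀ = c * x + d by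
        rw [Matrix.transpose_neg, Matrix.transpose_transpose]; noncomm_ring,
        show c * (-xᵀ) + d = d - c * xᵀ by noncomm_ring] at this
      exact h (this.symm.trans hD0)
    rw [hD0, hE0]
end

section
/- Let g = [[a,b],[c,d]] ∈ SL(2m,ℝ) (written in m×m blocks) satisfy aᵀc + cᵀa = 0, bᵀd + dᵀb = 0 and aᵀd + cᵀb = I_m (that is, gᵀΥg = Υ with Υ = [[0,I_m],[I_m,0]]). Then for every x ∈ M_m(ℝ) such that cx+d and −cxᵀ+d are invertible, writing g·x = (ax+b)(cx+d)⁻¹, one has det(g·x + (g·x)ᵀ) · det(cx+d) · det(d − cxᵀ) = det(x + xᵀ). -/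
/-!
Put `T = [[x, -xᵀ], [1, 1]]`, so that `det T = det (x + xᵀ)` and
`g T = [[ax + b, b - axᵀ], [cx + d, d - cxᵀ]] =: [[P, Q], [R, S]]`. The two block columns of `T`
are orthogonal for the form `Υ`, hence so are those of `g T`: `Pᵀ S + Rᵀ Q = 0`. This turns the
Schur complement `P - Q S⁻¹ R` into `(y + yᵀ) R` with `y = P R⁻¹ = g·x`, and
`det T = det (g T) = det S · det (y + yᵀ) · det R` because `det g = 1`.
-/

open Matrix

namespace Matrix

variable {n K : Type*} [Fintype n] [DecidableEq n] [CommRing K]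

theorem fromBlocks_mul_fromBlocks_neg_transpose_one_one (a b c d x : Matrix n n K) :
    fromBlocks a b c d * fromBlocks x (-xᵀ) 1 1
      = fromBlocks (a * x + b) (b - a * xᵀ) (c * x + d) (d - c * xᵀ) := by
  rw [fromBlocks_multiply]
  congr 1 <;> simp only [Matrix.mul_one, Matrix.mul_neg] <;> abel

theorem det_fromBlocks_neg_transpose_one_one (x : Matrix n n K) :
    (fromBlocks x (-xᵀ) 1 1).det = (x + xᵀ).det := by
  rw [det_fromBlocks_one₂₂, Matrix.neg_mul, Matrix.mul_one, sub_neg_eq_add]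

theorem transpose_mul_add_transpose_mul_eq_zero {a b c d : Matrix n n K}
    (hac : aᵀ * c + cᵀ * a = 0) (hbd : bᵀ * d + dᵀ * b = 0) (had : aᵀ * d + cᵀ * b = 1)
    (x : Matrix n n K) :
    (a * x + b)ᵀ * (d - c * xᵀ) + (c * x + d)ᵀ * (b - a * xᵀ) = 0 := by
  have hda : bᵀ * c + dᵀ * a = 1 := by
    simpa only [transpose_add, transpose_mul, transpose_transpose, transpose_one, add_comm]
      using congrArg transpose had
  calc (a * x + b)ᵀ * (d - c * xᵀ) + (c * x + d)ᵀ * (b - a * xᵀ)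
      = xᵀ * (aᵀ * d + cᵀ * b) - xᵀ * ((aᵀ * c + cᵀ * a) * xᵀ) + (bᵀ * d + dᵀ * b)
          - (bᵀ * c + dᵀ * a) * xᵀ := by
        simp only [transpose_add, transpose_mul]
        noncomm_ring
    _ = 0 := by
        rw [hac, hbd, had, hda]
        simp

theorem sub_mul_inv_mul_eq_add_transpose_mul {P Q R S : Matrix n n K}
    (hR : IsUnit R.det) (hS : IsUnit S.det) (hPS : Pᵀ * S + Rᵀ * Q = 0) :
    P - Q * S⁻¹ * R = (P * R⁻¹ + (P * R⁻¹)ᵀ) * R := by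
  have hRT : IsUnit Rᵀ.det := by rwa [det_transpose]
  have hQ : Rᵀ * Q = -(Pᵀ * S) := eq_neg_of_add_eq_zero_right hPS
  have hQSR : Q * S⁻¹ * R = -((P * R⁻¹)ᵀ * R) :=
    calc Q * S⁻¹ * R = (Rᵀ)⁻¹ * (Rᵀ * Q) * S⁻¹ * R := by
          rw [← Matrix.mul_assoc, nonsing_inv_mul _ hRT, Matrix.one_mul]
      _ = -((P * R⁻¹)ᵀ * R) := by
          rw [hQ, transpose_mul, ← transpose_nonsing_inv]
          simp only [Matrix.mul_neg, Matrix.neg_mul, Matrix.mul_assoc,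
            mul_nonsing_inv_cancel_left _ _ hS]
  rw [hQSR, sub_neg_eq_add, Matrix.add_mul, nonsing_inv_mul_cancel_right _ _ hR]

end Matrix

/-- For `g = [[a,b],[c,d]] ∈ SL(2m,ℝ)` with `gᵀΥg = Υ` (`Υ = [[0,I],[I,0]]`):
`det(g·x + (g·x)ᵀ) · det(cx+d) · det(d − cxᵀ) = det(x + xᵀ)`, the matrix instance of
`Δ((g·x)₀) = A(g,x) Δ(x₀)`. -/
theorem det_symmetric_part_conformal {m : ℕ}
    (a b c d : Matrix (Fin m) (Fin m) ℝ)
    (hg : (Matrix.fromBlocks a b c d).det = 1)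
    (h1 : aᵀ * c + cᵀ * a = 0) (h2 : bᵀ * d + dᵀ * b = 0)
    (h3 : aᵀ * d + cᵀ * b = 1) :
    ∀ x : Matrix (Fin m) (Fin m) ℝ,
      IsUnit (c * x + d).det → IsUnit (d - c * xᵀ).det →
      ((a * x + b) * (c * x + d)⁻¹ + ((a * x + b) * (c * x + d)⁻¹)ᵀ).det
          * (c * x + d).det * (d - c * xᵀ).det
        = (x + xᵀ).det := by
  intro x hR hS
  have : Invertible (d - c * xᵀ) := invertibleOfIsUnitDet _ hS
  calc ((a * x + b) * (c * x + d)⁻¹ + ((a * x + b) * (c * x + d)⁻¹)ᵀ).det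
        * (c * x + d).det * (d - c * xᵀ).det
      = (d - c * xᵀ).det * ((a * x + b) - (b - a * xᵀ) * (d - c * xᵀ)⁻¹ * (c * x + d)).det := by
        rw [sub_mul_inv_mul_eq_add_transpose_mul hR hS
          (transpose_mul_add_transpose_mul_eq_zero h1 h2 h3 x), det_mul]
        ring
    _ = (fromBlocks a b c d * fromBlocks x (-xᵀ) 1 1).det := by
        rw [fromBlocks_mul_fromBlocks_neg_transpose_one_one, det_fromBlocks₂₂,
          invOf_eq_nonsing_inv]
    _ = (x + xᵀ).det := by
        rw [det_mul, hg, one_mul, det_fromBlocks_neg_transpose_one_one]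
end

section
/- Let n ≥ 1 be an integer. There exists a constant c > 0, depending only on n, such that for all real numbers ν and λ with ν > n − 1 and |λ| < ν − (n−1)/2, ∫_{0}^{∞} ∫_{ℝ^{n−1}} ( 4x₀ / ((1+x₀)² + ‖x₁‖²) )^{ν} · x₀^{λ − (n+1)/2} dx₁ dx₀ = c · Γ(ν + λ − (n−1)/2) Γ(ν − λ − (n−1)/2) / ( Γ(ν) Γ(ν + 1 − n/2) ). -/
/-!
For fixed `x₀ > 0` the kernel is `(4x₀)^ν ((1+x₀)² + ‖x₁‖²)^(-ν)`. Rescaling `x₁` by `1 + x₀` and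
passing to polar coordinates with `r² = t` turns the inner integral into `(4x₀)^ν (1+x₀)^(d-2ν)`
times a Beta integral, `d = n - 1`. The outer integral is then the Beta integral
`∫₀^∞ t^(a-1) (1+t)^(-(a+b)) dt = B(a, b)` with `a, b = ν ± λ - ρ`, and Legendre's duplication
formula rewrites `Γ(ν - ρ) / Γ(2ν - 2ρ)` as a multiple of `1 / Γ(ν + 1 - n/2)`.
-/

open MeasureTheory Real Set Module

theorem integral_rpow_mul_one_sub_rpow {a b : ℝ} (ha : 0 < a) (hb : 0 < b) :
    ∫ x in (0:ℝ)..1, x ^ (a - 1) * (1 - x) ^ (b - 1) = Gamma a * Gamma b / Gamma (a + b) := by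
  apply Complex.ofReal_injective
  rw [← intervalIntegral.integral_ofReal]
  push_cast
  rw [← Complex.Gamma_ofReal, ← Complex.Gamma_ofReal, ← Complex.Gamma_ofReal, Complex.ofReal_add,
    ← Complex.betaIntegral_eq_Gamma_mul_div _ _ (by simpa) (by simpa), Complex.betaIntegral]
  refine intervalIntegral.integral_congr fun x hx => ?_
  rw [uIcc_of_le zero_le_one] at hx
  simp only [Complex.ofReal_cpow hx.1, Complex.ofReal_cpow (sub_nonneg.2 hx.2)]
  push_cast
  rfl

theorem image_div_one_sub_Ioo : (fun u : ℝ => u / (1 - u)) '' Ioo 0 1 = Ioi 0 := by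
  ext t
  constructor
  · rintro ⟨u, ⟨hu0, hu1⟩, rfl⟩
    exact div_pos hu0 (sub_pos.2 hu1)
  · intro (ht : 0 < t)
    refine ⟨t / (1 + t), ⟨by positivity, (div_lt_one (by positivity)).2 (by linarith)⟩, ?_⟩
    field_simp
    ring

theorem integral_Ioi_rpow_mul_one_add_rpow_neg {a b : ℝ} (ha : 0 < a) (hb : 0 < b) :
    ∫ t in Ioi (0:ℝ), t ^ (a - 1) * (1 + t) ^ (-(a + b)) = Gamma a * Gamma b / Gamma (a + b) := by
  have hderiv : ∀ u ∈ Ioo (0:ℝ) 1,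
      HasDerivWithinAt (fun u : ℝ => u / (1 - u)) ((1 - u) ^ 2)⁻¹ (Ioo 0 1) u := by
    intro u hu
    have h : HasDerivAt (fun u : ℝ => u / (1 - u)) ((1 * (1 - u) - u * (0 - 1)) / (1 - u) ^ 2) u :=
      (hasDerivAt_id' u).div ((hasDerivAt_const u 1).sub (hasDerivAt_id' u)) (sub_pos.2 hu.2).ne'
    exact h.hasDerivWithinAt.congr_deriv (by ring)
  have hinj : InjOn (fun u : ℝ => u / (1 - u)) (Ioo 0 1) := by
    intro u hu v hv h
    have := (sub_pos.2 hu.2).ne'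
    have := (sub_pos.2 hv.2).ne'
    field_simp at h
    linarith
  have hintegrand : ∀ u ∈ Ioo (0:ℝ) 1, |((1 - u) ^ 2)⁻¹| •
      ((u / (1 - u)) ^ (a - 1) * (1 + u / (1 - u)) ^ (-(a + b)))
        = u ^ (a - 1) * (1 - u) ^ (b - 1) := by
    rintro u ⟨hu, hu1⟩
    have hv : 0 < 1 - u := sub_pos.2 hu1
    have hsplit : (1 - u) ^ (a + b) = (1 - u) ^ (a - 1) * (1 - u) ^ (2:ℝ) * (1 - u) ^ (b - 1) := by
      rw [← rpow_add hv, ← rpow_add hv]; ring_nf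
    have hinv : 1 + u / (1 - u) = (1 - u)⁻¹ := by field_simp; ring
    rw [hinv, inv_rpow hv.le, rpow_neg hv.le, inv_inv, hsplit, div_rpow hu.le hv.le,
      abs_of_pos (by positivity), smul_eq_mul, rpow_two]
    have := (rpow_pos_of_pos hv (a - 1)).ne'
    field_simp
  rw [← image_div_one_sub_Ioo,
    integral_image_eq_integral_abs_deriv_smul measurableSet_Ioo hderiv hinj,
    setIntegral_congr_fun measurableSet_Ioo hintegrand, ← integral_Ioc_eq_integral_Ioo,
    ← intervalIntegral.integral_of_le zero_le_one, integral_rpow_mul_one_sub_rpow ha hb]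

theorem integral_Ioi_rpow_mul_one_add_sq_rpow_neg {s ν : ℝ} (hs : 0 < s) (hsν : s < 2 * ν) :
    ∫ r in Ioi (0:ℝ), r ^ (s - 1) * (1 + r ^ 2) ^ (-ν)
      = Gamma (s / 2) * Gamma (ν - s / 2) / (2 * Gamma ν) := by
  have hsubst := integral_comp_rpow_Ioi_of_pos (p := 2) two_pos
    (g := fun t : ℝ => 2⁻¹ * (t ^ (s / 2 - 1) * (1 + t) ^ (-(s / 2 + (ν - s / 2)))))
  have hintegrand : ∀ r ∈ Ioi (0:ℝ), r ^ (s - 1) * (1 + r ^ 2) ^ (-ν)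
      = (2 * r ^ ((2:ℝ) - 1)) • (2⁻¹ * ((r ^ (2:ℝ)) ^ (s / 2 - 1)
          * (1 + r ^ (2:ℝ)) ^ (-(s / 2 + (ν - s / 2))))) := by
    intro r (hr : 0 < r)
    have hsplit : r ^ (s - 1) = r ^ ((2:ℝ) - 1) * (r ^ (2:ℝ)) ^ (s / 2 - 1) := by
      rw [← rpow_mul hr.le, ← rpow_add hr]; ring_nf
    rw [hsplit, smul_eq_mul, rpow_two, add_sub_cancel]
    ring
  rw [setIntegral_congr_fun measurableSet_Ioi hintegrand, hsubst, integral_const_mul,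
    integral_Ioi_rpow_mul_one_add_rpow_neg (by positivity) (by linarith), add_sub_cancel]
  ring

section

variable {E : Type*} [NormedAddCommGroup E] [InnerProductSpace ℝ E] [FiniteDimensional ℝ E]
  [MeasurableSpace E] [BorelSpace E]

theorem integral_one_add_norm_sq_rpow_neg {ν : ℝ} (hν : (finrank ℝ E : ℝ) / 2 < ν) :
    ∫ x : E, (1 + ‖x‖ ^ 2) ^ (-ν) = √π ^ finrank ℝ E * Gamma (ν - finrank ℝ E / 2) / Gamma ν := by
  have hΓν := (Gamma_pos_of_pos (lt_of_le_of_lt (by positivity) hν)).ne'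
  rcases subsingleton_or_nontrivial E with hE | hE
  · have hvol : volume (parallelepiped (stdOrthonormalBasis ℝ E)) = 1 :=
      (stdOrthonormalBasis ℝ E).volume_parallelepiped
    have hne : (parallelepiped (stdOrthonormalBasis ℝ E)).Nonempty :=
      nonempty_of_measure_ne_zero (hvol ▸ one_ne_zero)
    rw [hne.eq_univ] at hvol
    simp [finrank_zero_of_subsingleton, Subsingleton.elim _ (0:E), Measure.real, hvol, hΓν]
  · have hd : 0 < finrank ℝ E := finrank_pos
    have hnat : ∫ y in Ioi (0:ℝ), y ^ (finrank ℝ E - 1) • (1 + y ^ 2) ^ (-ν)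
        = ∫ y in Ioi (0:ℝ), y ^ ((finrank ℝ E : ℝ) - 1) * (1 + y ^ 2) ^ (-ν) := by
      refine setIntegral_congr_fun measurableSet_Ioi fun y _ => ?_
      rw [smul_eq_mul, ← rpow_natCast, Nat.cast_sub hd, Nat.cast_one]
    rw [integral_fun_norm_addHaar volume (fun r => (1 + r ^ 2) ^ (-ν)), hnat,
      integral_Ioi_rpow_mul_one_add_sq_rpow_neg (by positivity) (by linarith), Measure.real,
      InnerProductSpace.volume_ball, ENNReal.ofReal_one, one_pow, one_mul,
      ENNReal.toReal_ofReal (by positivity), Gamma_add_one (by positivity), nsmul_eq_mul,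
      smul_eq_mul]
    have := (Gamma_pos_of_pos (by positivity : (0:ℝ) < finrank ℝ E / 2)).ne'
    field_simp

theorem integral_sq_add_norm_sq_rpow_neg {ν A : ℝ} (hν : (finrank ℝ E : ℝ) / 2 < ν) (hA : 0 < A) :
    ∫ x : E, (A ^ 2 + ‖x‖ ^ 2) ^ (-ν)
      = A ^ ((finrank ℝ E : ℝ) - 2 * ν)
        * (√π ^ finrank ℝ E * Gamma (ν - finrank ℝ E / 2) / Gamma ν) := by
  have hscale : ∀ x : E, (A ^ 2 + ‖x‖ ^ 2) ^ (-ν) = A ^ (-2 * ν) * (1 + ‖A⁻¹ • x‖ ^ 2) ^ (-ν) := by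
    intro x
    have hfactor : A ^ 2 + ‖x‖ ^ 2 = A ^ (2:ℝ) * (1 + ‖A⁻¹ • x‖ ^ 2) := by
      rw [norm_smul, norm_inv, norm_of_nonneg hA.le, rpow_two]
      field_simp
    rw [hfactor, mul_rpow (by positivity) (by positivity), ← rpow_mul hA.le]
    ring_nf
  rw [integral_congr_ae (.of_forall hscale), integral_const_mul,
    Measure.integral_comp_inv_smul_of_nonneg volume (fun y : E => (1 + ‖y‖ ^ 2) ^ (-ν)) hA.le,
    integral_one_add_norm_sq_rpow_neg hν, smul_eq_mul, ← mul_assoc, ← rpow_natCast,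
    ← rpow_add hA]
  ring_nf

theorem integral_berezin_kernel {ν x₀ : ℝ} (hν : (finrank ℝ E : ℝ) / 2 < ν) (hx₀ : 0 < x₀) :
    ∫ x₁ : E, (4 * x₀ / ((1 + x₀) ^ 2 + ‖x₁‖ ^ 2)) ^ ν
      = 4 ^ ν * (√π ^ finrank ℝ E * Gamma (ν - finrank ℝ E / 2) / Gamma ν)
        * (x₀ ^ ν * (1 + x₀) ^ ((finrank ℝ E : ℝ) - 2 * ν)) := by
  have hsplit : ∀ x₁ : E, (4 * x₀ / ((1 + x₀) ^ 2 + ‖x₁‖ ^ 2)) ^ ν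
      = (4 ^ ν * x₀ ^ ν) * ((1 + x₀) ^ 2 + ‖x₁‖ ^ 2) ^ (-ν) := by
    intro x₁
    rw [div_rpow (by positivity) (by positivity), mul_rpow (by norm_num) hx₀.le,
      rpow_neg (by positivity), div_eq_mul_inv]
  rw [integral_congr_ae (.of_forall hsplit), integral_const_mul,
    integral_sq_add_norm_sq_rpow_neg hν (by positivity)]
  ring

theorem integral_Ioi_integral_berezin_kernel_mul_rpow {ν s : ℝ} (ha : 0 < ν + s + 1)
    (hb : 0 < ν - s - 1 - finrank ℝ E) :
    ∫ x₀ in Ioi (0:ℝ), ∫ x₁ : E, (4 * x₀ / ((1 + x₀) ^ 2 + ‖x₁‖ ^ 2)) ^ ν * x₀ ^ s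
      = 4 ^ ν * (√π ^ finrank ℝ E * Gamma (ν - finrank ℝ E / 2) / Gamma ν)
        * (Gamma (ν + s + 1) * Gamma (ν - s - 1 - finrank ℝ E) / Gamma (2 * ν - finrank ℝ E)) := by
  have hinner : ∀ x₀ ∈ Ioi (0:ℝ), ∫ x₁ : E, (4 * x₀ / ((1 + x₀) ^ 2 + ‖x₁‖ ^ 2)) ^ ν * x₀ ^ s
      = 4 ^ ν * (√π ^ finrank ℝ E * Gamma (ν - finrank ℝ E / 2) / Gamma ν)
        * (x₀ ^ (ν + s + 1 - 1) * (1 + x₀) ^ (-(ν + s + 1 + (ν - s - 1 - finrank ℝ E)))) := by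
    intro x₀ (hx₀ : 0 < x₀)
    rw [integral_mul_const, integral_berezin_kernel (by linarith) hx₀, add_sub_cancel_right,
      rpow_add hx₀, show -(ν + s + 1 + (ν - s - 1 - finrank ℝ E)) = finrank ℝ E - 2 * ν by ring]
    ring
  rw [setIntegral_congr_fun measurableSet_Ioi hinner, integral_const_mul,
    integral_Ioi_rpow_mul_one_add_rpow_neg ha hb]
  ring_nf

end

theorem Gamma_two_mul_of_pos {z : ℝ} (hz : 0 < z) :
    Gamma (2 * z) = Gamma z * Gamma (z + 1 / 2) / (2 ^ (1 - 2 * z) * √π) := by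
  rw [Gamma_mul_Gamma_add_half_of_pos hz]
  field_simp

/-- The spherical Fourier transform of the Berezin function on real hyperbolic
`n`-space (half-space model): there is a constant `c > 0` depending only on `n` such
that for `ν > n−1` and `|λ| < ν − (n−1)/2`,
`∫₀^∞ ∫_{ℝ^{n−1}} (4x₀/((1+x₀)²+‖x₁‖²))^ν x₀^{λ−(n+1)/2} dx₁ dx₀
  = c Γ(ν+λ−(n−1)/2) Γ(ν−λ−(n−1)/2) / (Γ(ν) Γ(ν+1−n/2))`. -/
theorem spherical_fourier_berezin_hyperbolic (n : ℕ) (hn : 1 ≤ n) :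
    ∃ c : ℝ, 0 < c ∧ ∀ ν l : ℝ, (n : ℝ) - 1 < ν → |l| < ν - ((n : ℝ) - 1) / 2 →
      (∫ x₀ in Set.Ioi (0 : ℝ), ∫ x₁ : EuclideanSpace ℝ (Fin (n - 1)),
          (4 * x₀ / ((1 + x₀) ^ 2 + ‖x₁‖ ^ 2)) ^ ν * x₀ ^ (l - ((n : ℝ) + 1) / 2))
        = c * (Real.Gamma (ν + l - ((n : ℝ) - 1) / 2)
            * Real.Gamma (ν - l - ((n : ℝ) - 1) / 2))
          / (Real.Gamma ν * Real.Gamma (ν + 1 - (n : ℝ) / 2)) := by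
  refine ⟨2 ^ n * √π ^ n, by positivity, fun ν l hν hl => ?_⟩
  obtain ⟨hl₁, hl₂⟩ := abs_lt.mp hl
  have hz : 0 < ν - ((n : ℝ) - 1) / 2 := by linarith
  have hd : (finrank ℝ (EuclideanSpace ℝ (Fin (n - 1))) : ℝ) = n - 1 := by
    rw [finrank_euclideanSpace_fin, Nat.cast_sub hn, Nat.cast_one]
  rw [integral_Ioi_integral_berezin_kernel_mul_rpow (by linarith) (by rw [hd]; linarith), hd,
    finrank_euclideanSpace_fin,
    show ν + (l - ((n : ℝ) + 1) / 2) + 1 = ν + l - ((n : ℝ) - 1) / 2 by ring,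
    show ν - (l - ((n : ℝ) + 1) / 2) - 1 - ((n : ℝ) - 1) = ν - l - ((n : ℝ) - 1) / 2 by ring,
    show 2 * ν - ((n : ℝ) - 1) = 2 * (ν - ((n : ℝ) - 1) / 2) by ring,
    show ν + 1 - (n : ℝ) / 2 = ν - ((n : ℝ) - 1) / 2 + 1 / 2 by ring, Gamma_two_mul_of_pos hz]
  have h2 : (4:ℝ) ^ ν * 2 ^ (1 - 2 * (ν - ((n : ℝ) - 1) / 2)) = 2 ^ n := by
    rw [show (4:ℝ) = 2 ^ (2:ℝ) by norm_num, ← rpow_mul zero_le_two, ← rpow_add two_pos,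
      ← rpow_natCast]
    ring_nf
  have hπ : √π ^ (n - 1) * √π = √π ^ n := by rw [← pow_succ, Nat.sub_add_cancel hn]
  have hΓz := (Gamma_pos_of_pos hz).ne'
  have hΓν := (Gamma_pos_of_pos (by linarith : 0 < ν)).ne'
  rw [← h2, ← hπ]
  -- keeps `field_simp` from normalising the argument of this `Γ` into a different form
  generalize Gamma (ν - ((n : ℝ) - 1) / 2) = Γz at hΓz ⊢
  field_simp
end

section
/- Let n ≥ 1 be an integer and for ν ∈ ℝ define ψ_ν : {(x₀,x₁) ∈ ℝ × ℝ^{n−1} : x₀ > 0} → ℝ by ψ_ν(x₀,x₁) = ( 4x₀ / ((1+x₀)² + ‖x₁‖²) )^{ν}. Then for every ν ∈ ℝ and every point (x₀,x₁) with x₀ > 0, the following Bernstein identity holds: ν(ν − n + 1) ψ_ν(x) − x₀² ( ∂²ψ_ν/∂x₀² + Δ_{x₁} ψ_ν )(x) + (n−2) x₀ (∂ψ_ν/∂x₀)(x) = ν(ν − n/2 + 1) ψ_{ν+1}(x), where Δ_{x₁} denotes the Euclidean Laplacian in the variables x₁ ∈ ℝ^{n−1}. -/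
/-!
Write `ψ_ν = u ^ ν` with `u = 4x₀ / ((1 + x₀)² + ‖x₁‖²)`. Along the `x₀`-axis and along every line
in the `x₁`-directions, `u` is an affine function divided by a monic quadratic, so the chain rule
`(u ^ ν)'' = ν u ^ ν (u'' / u + (ν - 1) (u' / u)²)` expresses every derivative in the identity as
`ψ_ν` times a rational function of `x₀`, `‖x₁‖²` and `⟪x₁, eᵢ⟫`. Summing `⟪x₁, eᵢ⟫²` over `i`
gives `‖x₁‖²`, and `ψ_{ν+1} = u ψ_ν` turns the identity into one between rational functions.
-/

open Filter Topology InnerProductSpace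

theorem deriv_deriv_rpow_const {u u' : ℝ → ℝ} {u'' x p : ℝ}
    (hu : ∀ᶠ y in 𝓝 x, HasDerivAt u (u' y) y) (hu' : HasDerivAt u' u'' x) (hx : 0 < u x) :
    deriv (deriv fun y => u y ^ p) x
      = p * u x ^ p * (u'' / u x + (p - 1) * (u' x / u x) ^ 2) := by
  have hpos : ∀ᶠ y in 𝓝 x, 0 < u y :=
    hu.self_of_nhds.continuousAt.eventually (lt_mem_nhds hx)
  have hderiv : deriv (fun y => u y ^ p) =ᶠ[𝓝 x] fun y => u' y * p * u y ^ (p - 1) := by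
    filter_upwards [hu, hpos] with y hy hy0
    exact (hy.rpow_const (Or.inl hy0.ne')).deriv
  have hpow : HasDerivAt (fun y => u y ^ (p - 1)) (u' x * (p - 1) * u x ^ (p - 1 - 1)) x :=
    hu.self_of_nhds.rpow_const (Or.inl hx.ne')
  rw [hderiv.deriv_eq, ((hu'.mul_const p).fun_mul hpow).deriv, Real.rpow_sub_one hx.ne' (p - 1),
    Real.rpow_sub_one hx.ne' p]
  field_simp

theorem hasDerivAt_affine (a b t : ℝ) : HasDerivAt (fun s => a * s + b) a t := by
  simpa using ((hasDerivAt_id t).const_mul a).add_const b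

theorem hasDerivAt_quadratic (p q t : ℝ) :
    HasDerivAt (fun s => s ^ 2 + p * s + q) (2 * t + p) t := by
  simpa using ((hasDerivAt_pow 2 t).add ((hasDerivAt_id t).const_mul p)).add_const q

section AffineDivQuadratic

variable {α β p q t : ℝ}

theorem hasDerivAt_affine_div_quadratic (h : t ^ 2 + p * t + q ≠ 0) :
    HasDerivAt (fun s => (α * s + β) / (s ^ 2 + p * s + q))
      ((α * (t ^ 2 + p * t + q) - (α * t + β) * (2 * t + p)) / (t ^ 2 + p * t + q) ^ 2) t := by
  convert (hasDerivAt_affine α β t).fun_div (hasDerivAt_quadratic p q t) h using 2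

theorem hasDerivAt_deriv_affine_div_quadratic (h : t ^ 2 + p * t + q ≠ 0) :
    HasDerivAt
      (fun s => (α * (s ^ 2 + p * s + q) - (α * s + β) * (2 * s + p)) / (s ^ 2 + p * s + q) ^ 2)
      (-2 * (α * t + β) / (t ^ 2 + p * t + q) ^ 2
        - 2 * (α * (t ^ 2 + p * t + q) - (α * t + β) * (2 * t + p)) * (2 * t + p)
          / (t ^ 2 + p * t + q) ^ 3) t := by
  -- `(α Q - N Q')' = -N Q''` for `N = α s + β`, `Q = s ^ 2 + p s + q`, and `Q'' = 2`.
  have hN : HasDerivAt (fun s => α * (s ^ 2 + p * s + q) - (α * s + β) * (2 * s + p))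
      (-2 * (α * t + β)) t :=
    (((hasDerivAt_quadratic p q t).const_mul α).fun_sub
      ((hasDerivAt_affine α β t).fun_mul (hasDerivAt_affine 2 p t))).congr_deriv (by ring)
  refine (hN.fun_div ((hasDerivAt_quadratic p q t).fun_pow 2) (pow_ne_zero 2 h)).congr_deriv ?_
  rw [Nat.cast_ofNat, Nat.add_one_sub_one, pow_one]
  field_simp

end AffineDivQuadratic

/-- The Berezin function `B_ν((x₀, x₁), e)` of the half-space model. -/
noncomputable def berezin {E : Type*} [NormedAddCommGroup E] (ν x₀ : ℝ) (x₁ : E) : ℝ :=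
  (4 * x₀ / ((1 + x₀) ^ 2 + ‖x₁‖ ^ 2)) ^ ν

section Berezin

variable {E : Type*} (ν : ℝ) {x₀ : ℝ}

section Normed

variable [NormedAddCommGroup E] (x₁ : E)

theorem berezin_add_one (hx₀ : 0 < x₀) :
    berezin (ν + 1) x₀ x₁ = berezin ν x₀ x₁ * (4 * x₀ / ((1 + x₀) ^ 2 + ‖x₁‖ ^ 2)) :=
  Real.rpow_add_one (by positivity) ν

theorem berezin_fst_eq :
    (fun t => berezin ν t x₁) = fun t => ((4 * t + 0) / (t ^ 2 + 2 * t + (1 + ‖x₁‖ ^ 2))) ^ ν := by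
  funext t
  rw [berezin]
  congr 1
  ring

theorem deriv_berezin_fst (hx₀ : 0 < x₀) :
    deriv (fun t => berezin ν t x₁) x₀
      = ν * berezin ν x₀ x₁ * (1 + ‖x₁‖ ^ 2 - x₀ ^ 2) / (x₀ * ((1 + x₀) ^ 2 + ‖x₁‖ ^ 2)) := by
  have hQ : 0 < x₀ ^ 2 + 2 * x₀ + (1 + ‖x₁‖ ^ 2) := by positivity
  have hu : 0 < (4 * x₀ + 0) / (x₀ ^ 2 + 2 * x₀ + (1 + ‖x₁‖ ^ 2)) := by positivity
  rw [berezin_fst_eq, ((hasDerivAt_affine_div_quadratic hQ.ne').rpow_const (Or.inl hu.ne')).deriv,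
    Real.rpow_sub_one hu.ne', ← congrFun (berezin_fst_eq ν x₁) x₀]
  field_simp
  ring

theorem deriv_deriv_berezin_fst (hx₀ : 0 < x₀) :
    deriv (deriv fun t => berezin ν t x₁) x₀
      = ν * berezin ν x₀ x₁
        * ((ν - 1) * ((1 + ‖x₁‖ ^ 2 - x₀ ^ 2) / (x₀ * ((1 + x₀) ^ 2 + ‖x₁‖ ^ 2))) ^ 2
          - 2 / ((1 + x₀) ^ 2 + ‖x₁‖ ^ 2)
          - 4 * (1 + ‖x₁‖ ^ 2 - x₀ ^ 2) * (1 + x₀) / (x₀ * ((1 + x₀) ^ 2 + ‖x₁‖ ^ 2) ^ 2)) := by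
  have hQ : 0 < x₀ ^ 2 + 2 * x₀ + (1 + ‖x₁‖ ^ 2) := by positivity
  have hu : 0 < (4 * x₀ + 0) / (x₀ ^ 2 + 2 * x₀ + (1 + ‖x₁‖ ^ 2)) := by positivity
  have hderiv : ∀ᶠ s in 𝓝 x₀,
      HasDerivAt (fun s => (4 * s + 0) / (s ^ 2 + 2 * s + (1 + ‖x₁‖ ^ 2)))
      ((4 * (s ^ 2 + 2 * s + (1 + ‖x₁‖ ^ 2)) - (4 * s + 0) * (2 * s + 2))
        / (s ^ 2 + 2 * s + (1 + ‖x₁‖ ^ 2)) ^ 2) s := by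
    filter_upwards [eventually_gt_nhds hx₀] with s hs
    exact hasDerivAt_affine_div_quadratic (by positivity)
  rw [berezin_fst_eq, deriv_deriv_rpow_const hderiv
    (hasDerivAt_deriv_affine_div_quadratic hQ.ne') hu, ← congrFun (berezin_fst_eq ν x₁) x₀]
  field_simp
  ring

end Normed

section Inner

variable [NormedAddCommGroup E] [InnerProductSpace ℝ E] (x₁ : E) {v : E}

theorem norm_add_smul_sq_of_norm_eq_one (hv : ‖v‖ = 1) (t : ℝ) :
    ‖x₁ + t • v‖ ^ 2 = t ^ 2 + 2 * ⟪x₁, v⟫_ℝ * t + ‖x₁‖ ^ 2 := by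
  rw [norm_add_sq_real, real_inner_smul_right, norm_smul, hv, Real.norm_eq_abs, mul_one, sq_abs]
  ring

theorem berezin_line_eq (hv : ‖v‖ = 1) :
    (fun t : ℝ => berezin ν x₀ (x₁ + t • v)) = fun t =>
      ((0 * t + 4 * x₀) / (t ^ 2 + 2 * ⟪x₁, v⟫_ℝ * t + ((1 + x₀) ^ 2 + ‖x₁‖ ^ 2))) ^ ν := by
  funext t
  rw [berezin, norm_add_smul_sq_of_norm_eq_one x₁ hv]
  congr 1
  ring

theorem deriv_deriv_berezin_line (hx₀ : 0 < x₀) (hv : ‖v‖ = 1) :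
    deriv (deriv fun t : ℝ => berezin ν x₀ (x₁ + t • v)) 0
      = ν * berezin ν x₀ x₁ * (4 * (ν + 1) * ⟪x₁, v⟫_ℝ ^ 2 / ((1 + x₀) ^ 2 + ‖x₁‖ ^ 2) ^ 2
          - 2 / ((1 + x₀) ^ 2 + ‖x₁‖ ^ 2)) := by
  have hQ (s : ℝ) : 0 < s ^ 2 + 2 * ⟪x₁, v⟫_ℝ * s + ((1 + x₀) ^ 2 + ‖x₁‖ ^ 2) := by
    have := norm_add_smul_sq_of_norm_eq_one x₁ hv s
    nlinarith [sq_nonneg ‖x₁ + s • v‖]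
  have hu : 0 < (0 * 0 + 4 * x₀) / (0 ^ 2 + 2 * ⟪x₁, v⟫_ℝ * 0 + ((1 + x₀) ^ 2 + ‖x₁‖ ^ 2)) := by
    simp only [mul_zero, zero_add, ne_eq, OfNat.ofNat_ne_zero, not_false_eq_true, zero_pow]
    positivity
  rw [berezin_line_eq ν x₁ hv, deriv_deriv_rpow_const
    (Eventually.of_forall fun s => hasDerivAt_affine_div_quadratic (hQ s).ne')
    (hasDerivAt_deriv_affine_div_quadratic (hQ 0).ne') hu, berezin]
  simp only [mul_zero, zero_mul, zero_add, add_zero, ne_eq, OfNat.ofNat_ne_zero, not_false_eq_true,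
    zero_pow]
  field_simp
  ring

theorem sum_deriv_deriv_berezin_single {m : ℕ} (x₁ : EuclideanSpace ℝ (Fin m)) (hx₀ : 0 < x₀) :
    ∑ i, deriv (deriv fun t : ℝ => berezin ν x₀ (x₁ + t • EuclideanSpace.single i (1 : ℝ))) 0
      = ν * berezin ν x₀ x₁ * (4 * (ν + 1) * ‖x₁‖ ^ 2 / ((1 + x₀) ^ 2 + ‖x₁‖ ^ 2) ^ 2
          - 2 * m / ((1 + x₀) ^ 2 + ‖x₁‖ ^ 2)) := by
  rw [Finset.sum_congr rfl fun i _ => deriv_deriv_berezin_line ν x₁ hx₀ (by simp),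
    ← Finset.mul_sum, Finset.sum_sub_distrib, ← Finset.sum_div, ← Finset.mul_sum]
  simp only [EuclideanSpace.inner_single_right, Real.ringHom_apply, one_mul,
    ← EuclideanSpace.real_norm_sq_eq, Finset.sum_const, Finset.card_univ, Fintype.card_fin,
    nsmul_eq_mul]
  ring

end Inner

end Berezin

/-- The Bernstein identity `D(ν) B_ν = b(ν) B_{ν+1}` for the Berezin function
`ψ_ν(x₀,x₁) = (4x₀/((1+x₀)²+‖x₁‖²))^ν` on the half-space model of real hyperbolic
`n`-space: `ν(ν−n+1) ψ_ν − x₀²(∂²ψ_ν/∂x₀² + Δ_{x₁}ψ_ν) + (n−2)x₀ ∂ψ_ν/∂x₀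
 = ν(ν−n/2+1) ψ_{ν+1}`. -/
theorem bernstein_identity_hyperbolic (n : ℕ) (hn : 1 ≤ n) (ν : ℝ)
    (ψ : ℝ → ℝ → EuclideanSpace ℝ (Fin (n - 1)) → ℝ)
    (hψ : ∀ (μ x₀ : ℝ) (x₁ : EuclideanSpace ℝ (Fin (n - 1))),
      ψ μ x₀ x₁ = (4 * x₀ / ((1 + x₀) ^ 2 + ‖x₁‖ ^ 2)) ^ μ) :
    ∀ (x₀ : ℝ), 0 < x₀ → ∀ (x₁ : EuclideanSpace ℝ (Fin (n - 1))),
      ν * (ν - n + 1) * ψ ν x₀ x₁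
        - x₀ ^ 2 * (deriv (deriv (fun t : ℝ => ψ ν t x₁)) x₀
            + ∑ i : Fin (n - 1),
                deriv (deriv (fun t : ℝ =>
                  ψ ν x₀ (x₁ + t • EuclideanSpace.single i (1 : ℝ)))) 0)
        + ((n : ℝ) - 2) * x₀ * deriv (fun t : ℝ => ψ ν t x₁) x₀
      = ν * (ν - (n : ℝ) / 2 + 1) * ψ (ν + 1) x₀ x₁ := by
  intro x₀ hx₀ x₁
  obtain rfl : ψ = berezin := by
    funext μ x₀ x₁
    exact hψ μ x₀ x₁
  rw [deriv_deriv_berezin_fst ν x₁ hx₀, sum_deriv_deriv_berezin_single ν x₁ hx₀,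
    deriv_berezin_fst ν x₁ hx₀, berezin_add_one ν x₁ hx₀, Nat.cast_sub hn, Nat.cast_one]
  field_simp
  ring
end

section
/- Let f be a function holomorphic on the open right half-plane {z ∈ ℂ : Re z > 0} and continuous on its closure, and suppose there exist constants C > 0 and N ∈ ℕ such that |f(z)| ≤ C(1+|z|)^N for all z with Re z ≥ 0. If f(k) = 0 for every positive integer k, then f is identically zero on {Re z > 0}. -/
/-!
Dividing `f` by `(z + 1) ^ N` reduces the theorem to a bounded function `g`. If `g` is bounded
by `M` on the closed right half-plane and vanishes at `c > 0`, then so is `(z + c) / (z - c) * g`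
(with its removable singularity filled in): the Blaschke factor has modulus one on the imaginary
axis and is bounded away from `c`, so Phragmén–Lindelöf transfers the bound. Dividing out the
zeros `1, …, n` gives `‖g z‖ ≤ M * ∏ k ≤ n, ‖z - k‖ / ‖z + k‖`, and the product tends to zero
because `1 - (‖z - k‖ / ‖z + k‖) ^ 2` is of order `Re z / k` and the harmonic series diverges.
-/

open Complex Filter Finset Topology

structure BoundedOnRightHalfPlane (g : ℂ → ℂ) (M : ℝ) : Prop where
  diffContOnCl : DiffContOnCl ℂ g {z : ℂ | 0 < z.re}
  norm_le : ∀ z : ℂ, 0 ≤ z.re → ‖g z‖ ≤ M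

lemma norm_add_ofReal_eq_norm_sub_ofReal {z : ℂ} (hz : z.re = 0) (c : ℝ) :
    ‖z + c‖ = ‖z - c‖ := by
  have h : z + c = -(starRingEnd ℂ) (z - c) := by
    apply Complex.ext <;> simp [hz]
  rw [h, norm_neg, RCLike.norm_conj]

lemma sq_norm_sub_ofReal (z : ℂ) (c : ℝ) : ‖z - c‖ ^ 2 = ‖z + c‖ ^ 2 - 4 * z.re * c := by
  simp only [Complex.sq_norm, Complex.normSq_apply, sub_re, add_re, sub_im, add_im,
    ofReal_re, ofReal_im]
  ring

lemma add_ofReal_ne_zero {z : ℂ} {c : ℝ} (hz : 0 ≤ z.re) (hc : 0 < c) : z + c ≠ 0 := by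
  intro h
  have := congrArg re h
  simp only [add_re, ofReal_re, zero_re] at this
  linarith

lemma norm_add_ofReal_le {z : ℂ} {c : ℝ} (hc : 0 ≤ c) (h : 1 ≤ ‖z - c‖) :
    ‖z + c‖ ≤ (1 + 2 * c) * ‖z - c‖ :=
  calc ‖z + c‖ = ‖(z - c) + (2 * c : ℝ)‖ := by push_cast; ring_nf
    _ ≤ ‖z - c‖ + 2 * c := by
      grw [norm_add_le, norm_real, Real.norm_of_nonneg (by positivity)]
    _ ≤ (1 + 2 * c) * ‖z - c‖ := by nlinarith

lemma norm_sub_div_norm_add_le_exp {z : ℂ} {c : ℝ} (hz : 0 ≤ z.re) (hc : 1 ≤ c) :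
    ‖z - c‖ / ‖z + c‖ ≤ Real.exp (-(2 * z.re / (1 + ‖z‖) ^ 2 / c)) := by
  have hc0 : 0 < c := by linarith
  have hzc : 0 < ‖z + c‖ := norm_pos_iff.mpr (add_ofReal_ne_zero hz hc0)
  have hzc_le : ‖z + c‖ ≤ (1 + ‖z‖) * c := by
    calc ‖z + c‖ ≤ ‖z‖ + c := by
          grw [norm_add_le, norm_real, Real.norm_of_nonneg hc0.le]
      _ ≤ (1 + ‖z‖) * c := by nlinarith [norm_nonneg z]
  set t := 4 * z.re / (1 + ‖z‖) ^ 2 / c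
  have hsq : (‖z - c‖ / ‖z + c‖) ^ 2 ≤ 1 - t := by
    have hsq_eq : (‖z - c‖ / ‖z + c‖) ^ 2 = 1 - 4 * z.re * c / ‖z + c‖ ^ 2 := by
      rw [div_pow, sq_norm_sub_ofReal]
      field_simp
    have ht : t = 4 * z.re * c / ((1 + ‖z‖) * c) ^ 2 := by
      simp only [t]
      field_simp
    rw [hsq_eq, ht]
    gcongr
  have hexp : Real.exp (-(t / 2)) ^ 2 = Real.exp (-t) := by
    rw [← Real.exp_nat_mul]
    ring_nf
  have hhalf : 2 * z.re / (1 + ‖z‖) ^ 2 / c = t / 2 := by ring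
  rw [hhalf, ← pow_le_pow_iff_left₀ (by positivity) (Real.exp_pos _).le two_ne_zero, hexp]
  exact hsq.trans (Real.one_sub_le_exp_neg t)

lemma tendsto_prod_norm_sub_div_norm_add {z : ℂ} (hz : 0 < z.re) :
    Tendsto (fun n : ℕ => ∏ k ∈ range n, ‖z - (k + 1 : ℝ)‖ / ‖z + (k + 1 : ℝ)‖) atTop (𝓝 0) := by
  set b := 2 * z.re / (1 + ‖z‖) ^ 2
  have hb : 0 < b := by positivity
  have hprod : ∀ n : ℕ, ∏ k ∈ range n, ‖z - (k + 1 : ℝ)‖ / ‖z + (k + 1 : ℝ)‖ ≤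
      Real.exp (-(b * ∑ k ∈ range n, 1 / (k + 1 : ℝ))) := by
    intro n
    rw [mul_sum, ← sum_neg_distrib, Real.exp_sum]
    gcongr with k
    rw [mul_one_div]
    exact norm_sub_div_norm_add_le_exp hz.le (le_add_of_nonneg_left k.cast_nonneg)
  refine squeeze_zero (fun n => by positivity) hprod ?_
  exact Real.tendsto_exp_atBot.comp <| tendsto_neg_atTop_atBot.comp <|
    Tendsto.const_mul_atTop hb Real.tendsto_sum_range_one_div_nat_succ_atTop

lemma norm_div_add_one_pow_le {z w : ℂ} {C : ℝ} {N : ℕ} (hz : 0 ≤ z.re)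
    (hw : ‖w‖ ≤ C * (1 + ‖z‖) ^ N) : ‖w / (z + 1) ^ N‖ ≤ C * 2 ^ N := by
  have hC : 0 ≤ C := nonneg_of_mul_nonneg_left ((norm_nonneg w).trans hw) (by positivity)
  have hone : 1 ≤ ‖z + 1‖ := by
    calc (1 : ℝ) ≤ (z + 1).re := by simpa using hz
      _ ≤ ‖z + 1‖ := re_le_norm _
  have hnorm : ‖z‖ ≤ ‖z + 1‖ := by
    rw [← sq_le_sq₀ (norm_nonneg _) (norm_nonneg _), Complex.sq_norm, Complex.sq_norm,
      normSq_apply, normSq_apply]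
    simp only [add_re, one_re, add_im, one_im, add_zero]
    nlinarith
  rw [norm_div, norm_pow, div_le_iff₀ (by positivity)]
  calc ‖w‖ ≤ C * (1 + ‖z‖) ^ N := hw
    _ ≤ C * (2 * ‖z + 1‖) ^ N := by gcongr; linarith
    _ = C * 2 ^ N * ‖z + 1‖ ^ N := by ring

namespace BoundedOnRightHalfPlane

variable {g : ℂ → ℂ} {M : ℝ}

lemma exists_blaschke_quotient (hg : BoundedOnRightHalfPlane g M) {c : ℝ} (hc : 0 < c)
    (hgc : g c = 0) :
    ∃ h : ℂ → ℂ, BoundedOnRightHalfPlane h M ∧ ∀ z, (z + c) * g z = (z - c) * h z := by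
  set h : ℂ → ℂ := fun z => (z + c) * dslope g c z
  have hrel : ∀ z, (z + c) * g z = (z - c) * h z := fun z => by
    have := sub_smul_dslope g c z
    rw [hgc, sub_zero, smul_eq_mul] at this
    rw [← this]
    ring
  have hnorm : ∀ z : ℂ, ‖z + c‖ * ‖g z‖ = ‖z - c‖ * ‖h z‖ := fun z => by
    simpa only [norm_mul] using congrArg norm (hrel z)
  have hM : 0 ≤ M := (norm_nonneg _).trans (hg.norm_le 0 le_rfl)
  have hnhds : {z : ℂ | 0 < z.re} ∈ 𝓝 (c : ℂ) :=
    (isOpen_lt continuous_const continuous_re).mem_nhds (by simpa using hc)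
  have hdiff : DifferentiableOn ℂ h {z : ℂ | 0 < z.re} :=
    (differentiableOn_id.add_const _).mul
      ((differentiableOn_dslope hnhds).mpr hg.diffContOnCl.differentiableOn)
  have hcont : ContinuousOn h (closure {z : ℂ | 0 < z.re}) := by
    exact (continuous_id.add continuous_const).continuousOn.mul
      ((continuousOn_dslope (mem_of_superset hnhds subset_closure)).mpr
        ⟨hg.diffContOnCl.continuousOn, hg.diffContOnCl.differentiableOn.differentiableAt hnhds⟩)
  have hfar : ∀ z : ℂ, 0 ≤ z.re → 1 ≤ ‖z - c‖ → ‖h z‖ ≤ (1 + 2 * c) * M := fun z hz hz1 => by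
    refine le_of_mul_le_mul_left ?_ (by linarith : 0 < ‖z - c‖)
    calc ‖z - c‖ * ‖h z‖ = ‖z + c‖ * ‖g z‖ := (hnorm z).symm
      _ ≤ (1 + 2 * c) * ‖z - c‖ * M :=
        mul_le_mul (norm_add_ofReal_le hc.le hz1) (hg.norm_le z hz) (norm_nonneg _)
          (by positivity)
      _ = ‖z - c‖ * ((1 + 2 * c) * M) := by ring
  have hdcl : DiffContOnCl ℂ h {z : ℂ | 0 < z.re} := ⟨hdiff, hcont⟩
  refine ⟨h, ⟨hdcl, fun z hz =>
    PhragmenLindelof.right_half_plane_of_bounded_on_real hdcl ?_ ?_ ?_ hz⟩, hrel⟩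
  · have hcob : ∀ᶠ w : ℂ in Bornology.cobounded ℂ, 1 ≤ ‖w - c‖ :=
      (eventually_cobounded_le_norm (1 + c)).mono fun w hw => by
        have := norm_sub_norm_le w c
        rw [norm_real, Real.norm_of_nonneg hc.le] at this
        linarith
    refine ⟨1, one_lt_two, 0, Asymptotics.IsBigO.of_bound ((1 + 2 * c) * M) ?_⟩
    filter_upwards [hcob.filter_mono inf_le_left, mem_inf_of_right (mem_principal_self _)]
      with w hw1 hw2
    simpa using hfar w (le_of_lt hw2) hw1
  · refine isBoundedUnder_of_eventually_le (a := (1 + 2 * c) * M) ?_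
    filter_upwards [eventually_ge_atTop (c + 1)] with x hx
    refine hfar x (by simp; linarith) ?_
    rw [← ofReal_sub, norm_real, Real.norm_of_nonneg (by linarith)]
    linarith
  · intro y
    have hre : (y * I : ℂ).re = 0 := by simp
    have hne : ‖(y * I : ℂ) - c‖ ≠ 0 := by
      refine norm_ne_zero_iff.mpr (sub_ne_zero.mpr fun h => ?_)
      rw [h, ofReal_re] at hre
      exact hc.ne' hre
    have := hnorm (y * I)
    rw [norm_add_ofReal_eq_norm_sub_ofReal hre] at this
    rw [← mul_left_cancel₀ hne this]
    exact hg.norm_le _ hre.ge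

lemma norm_le_mul_prod (hg : BoundedOnRightHalfPlane g M) {s : Finset ℝ}
    (hs : ∀ c ∈ s, 0 < c ∧ g c = 0) {z : ℂ} (hz : 0 ≤ z.re) :
    ‖g z‖ ≤ M * ∏ c ∈ s, ‖z - c‖ / ‖z + c‖ := by
  induction s using Finset.induction_on generalizing g with
  | empty => simpa using hg.norm_le z hz
  | insert a s ha ih =>
    obtain ⟨ha0, hga⟩ := hs a (mem_insert_self a s)
    obtain ⟨h, hh, hrel⟩ := hg.exists_blaschke_quotient ha0 hga
    have hs' : ∀ c ∈ s, 0 < c ∧ h c = 0 := fun c hc => by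
      obtain ⟨hc0, hgc⟩ := hs c (mem_insert_of_mem hc)
      have hca : (c : ℂ) - a ≠ 0 :=
        sub_ne_zero.mpr (ofReal_injective.ne (ne_of_mem_of_not_mem hc ha))
      refine ⟨hc0, (mul_eq_zero.mp ?_).resolve_left hca⟩
      rw [← hrel, hgc, mul_zero]
    have hza : 0 < ‖z + a‖ := norm_pos_iff.mpr (add_ofReal_ne_zero hz ha0)
    have hgz : ‖g z‖ = ‖z - a‖ / ‖z + a‖ * ‖h z‖ := by
      rw [div_mul_eq_mul_div, eq_div_iff hza.ne', mul_comm, ← norm_mul, ← norm_mul, hrel]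
    rw [hgz, prod_insert ha, mul_left_comm]
    exact mul_le_mul_of_nonneg_left (ih hh hs') (by positivity)

end BoundedOnRightHalfPlane

theorem carlson_polynomial_growth_general (f : ℂ → ℂ)
    (hd : DifferentiableOn ℂ f {z : ℂ | 0 < z.re})
    (hc : ContinuousOn f {z : ℂ | 0 ≤ z.re})
    (C : ℝ) (N : ℕ)
    (hbd : ∀ z : ℂ, 0 ≤ z.re → ‖f z‖ ≤ C * (1 + ‖z‖) ^ N)
    (hzero : ∀ k : ℕ, 0 < k → f k = 0) :
    ∀ z : ℂ, 0 < z.re → f z = 0 := by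
  have hpow : ∀ z : ℂ, 0 ≤ z.re → (z + 1) ^ N ≠ 0 := fun z hz =>
    pow_ne_zero N (by simpa using add_ofReal_ne_zero hz one_pos)
  set g : ℂ → ℂ := fun z => f z / (z + 1) ^ N
  have hg : BoundedOnRightHalfPlane g (C * 2 ^ N) := by
    refine ⟨⟨hd.div (by fun_prop) fun z hz => hpow z (le_of_lt hz), ?_⟩,
      fun z hz => norm_div_add_one_pow_le hz (hbd z hz)⟩
    rw [closure_setOfPred_lt_re]
    exact hc.div (by fun_prop) hpow
  have hg_zero (n : ℕ) :
      ∀ c ∈ (range n).image (fun k : ℕ => (k + 1 : ℝ)), 0 < c ∧ g c = 0 := by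
    simp only [mem_image, forall_exists_index, and_imp]
    rintro _ k - rfl
    refine ⟨by positivity, ?_⟩
    have hfk := hzero (k + 1) k.succ_pos
    push_cast at hfk
    simp [g, hfk]
  intro z hz
  have hprod (n : ℕ) :
      ‖g z‖ ≤ C * 2 ^ N * ∏ k ∈ range n, ‖z - (k + 1 : ℝ)‖ / ‖z + (k + 1 : ℝ)‖ := by
    have hbound := hg.norm_le_mul_prod (hg_zero n) hz.le
    rwa [prod_image fun a _ b _ hab => by simpa using hab] at hbound
  have hgz : g z = 0 := norm_le_zero_iff.mp <| ge_of_tendsto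
    (by simpa using (tendsto_prod_norm_sub_div_norm_add hz).const_mul (C * 2 ^ N))
    (Eventually.of_forall hprod)
  simpa [g, hpow z hz.le] using hgz

/-- Carlson's theorem (polynomial growth case): a function holomorphic on the open
right half-plane, continuous on its closure, of polynomial growth there, and
vanishing at every positive integer, vanishes identically on the right half-plane. -/
theorem carlson_polynomial_growth (f : ℂ → ℂ)
    (hd : DifferentiableOn ℂ f {z : ℂ | 0 < z.re})
    (hc : ContinuousOn f {z : ℂ | 0 ≤ z.re})
    (C : ℝ) (hC : 0 < C) (N : ℕ)
    (hbd : ∀ z : ℂ, 0 ≤ z.re → ‖f z‖ ≤ C * (1 + ‖z‖) ^ N)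
    (hzero : ∀ k : ℕ, 0 < k → f k = 0) :
    ∀ z : ℂ, 0 < z.re → f z = 0 :=
  carlson_polynomial_growth_general f hd hc C N hbd hzero
end
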